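/- arXiv:chao-dyn/9812013 — 6 statements merged into one kernel-verified Lean document; each statement's English description precedes it below -/
import Mathlib

section
/- Let σ(N) = C(0)/N + (2/N²) Σ_{j=1}^{N} (N−j) C(j), where C(j) are real numbers with |C(j)| ≤ K e^{−λ j} for some constants K > 0, λ > 0. Then σ(N) = O(1/N²) as N → ∞ if and only if C(0) + 2 Σ_{j=1}^{∞} C(j) = 0. -/
/-!
With `A = C 0 + 2 ∑_{j ≥ 1} C j`, the splitting
`∑_{j=1}^N (N - j) C j = N ∑_{j ≤ N} C j - ∑_{j ≤ N} j C j` gives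
`σ N - A / N = -(2 / N) ∑_{j > N} C j - (2 / N²) ∑_{j ≤ N} j C j`.
Once `∑ j |C j| < ∞`, which exponential decay provides, both terms are `O(1 / N²)`: the weighted
partial sums are bounded, and `N |∑_{j > N} C j| ≤ ∑_{j > N} j |C j|`. So `σ N = O(1 / N²)` iff
`A / N = O(1 / N²)`, i.e. iff `A = 0`.
-/

open Finset Filter Asymptotics

theorem sum_Icc_one_eq_sum_range {M : Type*} [AddCommMonoid M] (f : ℕ → M) (N : ℕ) :
    ∑ j ∈ Icc 1 N, f j = ∑ j ∈ range N, f (j + 1) := by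
  rw [← Finset.Ico_add_one_right_eq_Icc, sum_Ico_eq_sum_range]
  simp only [Nat.add_sub_cancel, add_comm 1]

theorem summable_natCast_mul_abs_of_abs_le_exp {C : ℕ → ℝ} {K lam : ℝ} (hlam : 0 < lam)
    (hdecay : ∀ j : ℕ, 1 ≤ j → |C j| ≤ K * Real.exp (-lam * j)) :
    Summable fun j : ℕ => (j : ℝ) * |C j| := by
  have hr : ‖Real.exp (-lam)‖ < 1 := by
    rw [Real.norm_eq_abs, abs_of_pos (Real.exp_pos _), Real.exp_lt_one_iff]
    linarith
  refine .of_nonneg_of_le (fun j => by positivity) (fun j => ?_)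
    ((summable_pow_mul_geometric_of_norm_lt_one 1 hr).mul_left K)
  rcases Nat.eq_zero_or_pos j with rfl | hj
  · simp
  · calc (j : ℝ) * |C j| ≤ j * (K * Real.exp (-lam * j)) := by gcongr; exact hdecay j hj
      _ = K * ((j : ℝ) ^ 1 * Real.exp (-lam) ^ j) := by
        rw [← Real.exp_nat_mul]; ring_nf

variable {C : ℕ → ℝ}

theorem summable_abs_comp_add_succ (hC : Summable fun j : ℕ => (j : ℝ) * |C j|) (k : ℕ) :
    Summable fun j : ℕ => |C (j + k + 1)| := by
  refine .of_nonneg_of_le (fun j => abs_nonneg _) (fun j => ?_)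
    ((summable_nat_add_iff (k + 1)).mpr hC)
  simp only [← add_assoc]
  exact le_mul_of_one_le_left (abs_nonneg _) (by
    push_cast; linarith [(j + k).cast_nonneg (α := ℝ)])

theorem summable_comp_succ (hC : Summable fun j : ℕ => (j : ℝ) * |C j|) :
    Summable fun j : ℕ => C (j + 1) :=
  .of_abs (summable_abs_comp_add_succ hC 0)

theorem natCast_mul_abs_tsum_tail_le (hC : Summable fun j : ℕ => (j : ℝ) * |C j|) (N : ℕ) :
    N * |∑' j, C (j + N + 1)| ≤ ∑' j : ℕ, (j : ℝ) * |C j| := by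
  have habs := summable_abs_comp_add_succ hC N
  have hshift : Summable fun j : ℕ => ((j + N + 1 : ℕ) : ℝ) * |C (j + N + 1)| := by
    simpa only [add_assoc] using (summable_nat_add_iff (N + 1)).mpr hC
  calc (N : ℝ) * |∑' j, C (j + N + 1)| ≤ N * ∑' j, |C (j + N + 1)| := by
        gcongr
        exact norm_tsum_le_tsum_norm (f := fun j => C (j + N + 1)) habs
    _ = ∑' j, N * |C (j + N + 1)| := (habs.tsum_mul_left _).symm
    _ ≤ ∑' j, ((j + N + 1 : ℕ) : ℝ) * |C (j + N + 1)| :=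
        (habs.mul_left _).tsum_le_tsum (fun j => by gcongr; omega) hshift
    _ ≤ ∑' j : ℕ, (j : ℝ) * |C j| := by
        simpa only [Function.comp_def, add_assoc] using
          tsum_comp_le_tsum_of_inj hC (fun j => by positivity) (add_left_injective (N + 1))

theorem tsum_tail_isBigO_one_div (hC : Summable fun j : ℕ => (j : ℝ) * |C j|) :
    (fun N : ℕ => ∑' j, C (j + N + 1)) =O[atTop] fun N : ℕ => 1 / (N : ℝ) := by
  refine .of_bound (∑' j : ℕ, (j : ℝ) * |C j|) ?_
  filter_upwards [eventually_gt_atTop 0] with N hN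
  rw [Real.norm_eq_abs, Real.norm_eq_abs, abs_of_pos (a := 1 / (N : ℝ)) (by positivity),
    mul_one_div, le_div_iff₀ (by positivity), mul_comm]
  exact natCast_mul_abs_tsum_tail_le hC N

theorem sum_Icc_natCast_mul_isBigO_one (hC : Summable fun j : ℕ => (j : ℝ) * |C j|) :
    (fun N : ℕ => ∑ j ∈ Icc 1 N, (j : ℝ) * C j) =O[atTop] fun _ => (1 : ℝ) := by
  refine .of_bound (∑' j : ℕ, (j : ℝ) * |C j|) (.of_forall fun N => ?_)
  rw [Real.norm_eq_abs, norm_one, mul_one]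
  calc |∑ j ∈ Icc 1 N, (j : ℝ) * C j| ≤ ∑ j ∈ Icc 1 N, (j : ℝ) * |C j| := by
        simpa only [abs_mul, Nat.abs_cast] using
          abs_sum_le_sum_abs (fun j : ℕ => (j : ℝ) * C j) (Icc 1 N)
    _ ≤ ∑' j : ℕ, (j : ℝ) * |C j| := hC.sum_le_tsum (Icc 1 N) fun j _ => by positivity

noncomputable def varianceOfMean (C : ℕ → ℝ) (N : ℕ) : ℝ :=
  C 0 / N + (2 / (N : ℝ) ^ 2) * ∑ j ∈ Icc 1 N, ((N : ℝ) - j) * C j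

noncomputable def asymptoticVariance (C : ℕ → ℝ) : ℝ := C 0 + 2 * ∑' j, C (j + 1)

theorem varianceOfMean_sub_div_eq (hC : Summable fun j => C (j + 1)) (N : ℕ) :
    varianceOfMean C N - asymptoticVariance C / N
      = -2 * ((∑' j, C (j + N + 1)) * (1 / N)
        + (∑ j ∈ Icc 1 N, (j : ℝ) * C j) * (1 / (N : ℝ) ^ 2)) := by
  have hsplit : ∑ j ∈ Icc 1 N, ((N : ℝ) - j) * C j
      = N * ∑ j ∈ range N, C (j + 1) - ∑ j ∈ Icc 1 N, (j : ℝ) * C j := by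
    rw [← sum_Icc_one_eq_sum_range, mul_sum, ← sum_sub_distrib]
    exact sum_congr rfl fun j _ => by ring
  rw [varianceOfMean, asymptoticVariance, hsplit, ← hC.sum_add_tsum_nat_add N]
  rcases eq_or_ne N 0 with rfl | hN
  · simp
  · field_simp
    ring

theorem varianceOfMean_sub_div_isBigO (hC : Summable fun j : ℕ => (j : ℝ) * |C j|) :
    (fun N => varianceOfMean C N - asymptoticVariance C / N) =O[atTop]
      fun N : ℕ => 1 / (N : ℝ) ^ 2 := by
  have htail : (fun N : ℕ => (∑' j, C (j + N + 1)) * (1 / N)) =O[atTop]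
      fun N : ℕ => 1 / (N : ℝ) ^ 2 :=
    ((tsum_tail_isBigO_one_div hC).mul (isBigO_refl _ _)).congr_right fun N => by
      rw [one_div_mul_one_div, sq]
  have hsum : (fun N : ℕ => (∑ j ∈ Icc 1 N, (j : ℝ) * C j) * (1 / (N : ℝ) ^ 2)) =O[atTop]
      fun N : ℕ => 1 / (N : ℝ) ^ 2 :=
    ((sum_Icc_natCast_mul_isBigO_one hC).mul (isBigO_refl _ _)).congr_right fun N => one_mul _
  simpa only [varianceOfMean_sub_div_eq (summable_comp_succ hC)] using
    (htail.add hsum).const_mul_left (-2)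

theorem div_natCast_isBigO_one_div_sq_iff {A : ℝ} :
    (fun N : ℕ => A / N) =O[atTop] (fun N : ℕ => 1 / (N : ℝ) ^ 2) ↔ A = 0 := by
  refine ⟨fun h => ?_, fun hA => by simp only [hA, zero_div, isBigO_zero]⟩
  have hconst : (fun _ : ℕ => A) =O[atTop] fun N : ℕ => 1 / (N : ℝ) := by
    refine ((isBigO_refl (fun N : ℕ => (N : ℝ)) atTop).mul h).congr' ?_ ?_ <;>
      filter_upwards [eventually_ne_atTop 0] with N hN <;> field_simp
  exact tendsto_nhds_unique tendsto_const_nhds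
    (hconst.trans_tendsto tendsto_one_div_atTop_nhds_zero_nat)

theorem superefficiency_condition_general
    (C : ℕ → ℝ) (K lam : ℝ) (hlam : 0 < lam)
    (hdecay : ∀ j : ℕ, 1 ≤ j → |C j| ≤ K * Real.exp (-lam * j))
    (σ : ℕ → ℝ)
    (hσ : ∀ N : ℕ, σ N = C 0 / N
        + (2 / (N : ℝ) ^ 2) * ∑ j ∈ Icc 1 N, ((N : ℝ) - (j : ℝ)) * C j) :
    (fun N : ℕ => σ N) =O[atTop] (fun N : ℕ => 1 / (N : ℝ) ^ 2)
      ↔ C 0 + 2 * ∑' j : ℕ, C (j + 1) = 0 := by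
  obtain rfl : σ = varianceOfMean C := funext hσ
  have hE := varianceOfMean_sub_div_isBigO (summable_natCast_mul_abs_of_abs_le_exp hlam hdecay)
  rw [← div_natCast_isBigO_one_div_sq_iff]
  exact ⟨fun h => (h.sub hE).congr_left fun N => sub_sub_cancel _ _,
    fun h => (hE.add h).congr_left fun N => sub_add_cancel _ _⟩

/-- with exponentially decaying covariances `C`, the expected squared
error `σ(N) = C(0)/N + (2/N²) Σ_{j=1}^{N} (N−j) C(j)` is `O(1/N²)` iff
`C(0) + 2 Σ_{j=1}^∞ C(j) = 0`. -/
theorem superefficiency_condition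
    (C : ℕ → ℝ) (K lam : ℝ) (hK : 0 < K) (hlam : 0 < lam)
    (hdecay : ∀ j : ℕ, 1 ≤ j → |C j| ≤ K * Real.exp (-lam * j))
    (σ : ℕ → ℝ)
    (hσ : ∀ N : ℕ, σ N = C 0 / N
        + (2 / (N : ℝ) ^ 2) * ∑ j ∈ Icc 1 N, ((N : ℝ) - (j : ℝ)) * C j) :
    (fun N : ℕ => σ N) =O[atTop] (fun N : ℕ => 1 / (N : ℝ) ^ 2)
      ↔ C 0 + 2 * ∑' j : ℕ, C (j + 1) = 0 :=
  superefficiency_condition_general C K lam hlam hdecay σ hσ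
end

section
/- Let B(x) = Σ_{k=1}^{L} b_k T_k(x) with p > L and p ≥ 2. Then for every j ≥ 1, ⟨B(x)·B(T_{p^j}(x))⟩ = 0 with respect to the measure dx/(π√(1−x²)) on [−1,1], i.e. the p-th Chebyshev map induces no dynamical correlation on B. -/
/-!
Since `T_m ∘ T_n = T_{mn}`, the function `B ∘ T_{p^j}` is a combination of `T_{m p^j}` with
`1 ≤ m ≤ L`, all of degree at least `p > L`. Its Chebyshev spectrum is therefore disjoint from that
of `B`, and orthogonality of the `T_k` for the weight `1 / √(1 - x²)` kills every cross term.
-/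

open Polynomial Polynomial.Chebyshev MeasureTheory Finset

namespace Polynomial.Chebyshev

theorem setIntegral_Icc_mul_one_div_pi_mul_sqrt (f : ℝ → ℝ) :
    ∫ x in Set.Icc (-1 : ℝ) 1, f x * (1 / (Real.pi * √(1 - x ^ 2)))
      = (∫ x, f x ∂measureT) / Real.pi := by
  rw [integral_measureT, ← intervalIntegral.integral_div,
    intervalIntegral.integral_of_le (by norm_num), integral_Icc_eq_integral_Ioc]
  congr 1 with x
  rw [Real.sqrt_inv]
  ring

theorem eval_T_eval_T {R : Type*} [CommRing R] (m n : ℕ) (x : R) :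
    (T R m).eval ((T R n).eval x) = (T R (m * n : ℕ)).eval x := by
  rw [Nat.cast_mul, T_mul, eval_comp]

theorem integral_sum_T_mul_sum_T_measureT_eq_zero {ι κ : Type*} (s : Finset ι) (t : Finset κ)
    (a : ι → ℝ) (c : κ → ℝ) (n : ι → ℕ) (m : κ → ℕ) (hnm : ∀ i ∈ s, ∀ k ∈ t, n i ≠ m k) :
    ∫ x, (∑ i ∈ s, a i * (T ℝ (n i)).eval x) * (∑ k ∈ t, c k * (T ℝ (m k)).eval x) ∂measureT
      = 0 := by
  simp_rw [sum_mul_sum, mul_mul_mul_comm]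
  rw [integral_finsetSum _ fun i _ => integrable_finsetSum _ fun k _ =>
    integrable_measureT (by fun_prop)]
  refine sum_eq_zero fun i hi => ?_
  rw [integral_finsetSum _ fun k _ => integrable_measureT (by fun_prop)]
  refine sum_eq_zero fun k hk => ?_
  rw [integral_const_mul, integral_eval_T_real_mul_eval_T_real_measureT_of_ne (hnm i hi k hk),
    mul_zero]

end Polynomial.Chebyshev

theorem chebyshev_no_correlation_general
    (L : ℕ) (b : ℕ → ℝ) (p : ℕ) (hL : L < p)
    (B : ℝ → ℝ) (hB : ∀ x, B x = ∑ k ∈ Icc 1 L, b k * (T ℝ k).eval x)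
    (j : ℕ) (hj : 1 ≤ j) :
    ∫ x in Set.Icc (-1 : ℝ) 1,
        B x * B ((T ℝ (p ^ j : ℕ)).eval x) * (1 / (Real.pi * Real.sqrt (1 - x ^ 2)))
      = 0 := by
  have hBT : ∀ x, B ((T ℝ (p ^ j : ℕ)).eval x)
      = ∑ m ∈ Icc 1 L, b m * (T ℝ (m * p ^ j : ℕ)).eval x := by
    intro x
    simp_rw [hB, eval_T_eval_T]
  have hspectra : ∀ k ∈ Icc 1 L, ∀ m ∈ Icc 1 L, k ≠ m * p ^ j := by
    intro k hk m hm
    rw [mem_Icc] at hk hm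
    have hp_le : p ≤ p ^ j := Nat.le_self_pow (by omega) p
    have : p ^ j ≤ m * p ^ j := Nat.le_mul_of_pos_left _ (by omega)
    omega
  rw [setIntegral_Icc_mul_one_div_pi_mul_sqrt]
  simp_rw [hBT, hB]
  rw [integral_sum_T_mul_sum_T_measureT_eq_zero _ _ _ _ (fun k => k) (fun m => m * p ^ j)
    hspectra, zero_div]

/-- if `B = Σ_{k=1}^L b_k T_k` with `L < p`, the `p`-th Chebyshev map
induces no dynamical correlation on `B`. -/
theorem chebyshev_no_correlation
    (L : ℕ) (b : ℕ → ℝ) (p : ℕ) (hp : 2 ≤ p) (hL : L < p)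
    (B : ℝ → ℝ) (hB : ∀ x, B x = ∑ k ∈ Icc 1 L, b k * (T ℝ k).eval x)
    (j : ℕ) (hj : 1 ≤ j) :
    ∫ x in Set.Icc (-1 : ℝ) 1,
        B x * B ((T ℝ (p ^ j : ℕ)).eval x) * (1 / (Real.pi * Real.sqrt (1 - x ^ 2)))
      = 0 :=
  chebyshev_no_correlation_general L b p hL B hB j hj
end

section
/- Let B(x) = a_c + Σ_{m=0}^{L} a_m T_{p^m}(x) with p ≥ 2, and let p' ≥ 2 be an integer such that p^m · p'^l ≠ p^{m'} for all 0 ≤ m, m' ≤ L and l ≥ 1 (e.g., p, p' distinct primes). Then ⟨B(x)·B(T_{p'^l}(x))⟩ = a_c² = ⟨B⟩² for every l ≥ 1, so the p'-th Chebyshev map produces zero dynamical correlation. -/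
/-!
Under `x = cos θ` the Chebyshev weight becomes `dθ / π` on `[0, π]`, and `T_n (cos θ) = cos (n θ)`,
so `T_{p^m} ∘ T_{p'^l} = T_{p^m p'^l}`. Hence `B (cos θ)` and `B (T_{p'^l} (cos θ))` are cosine
polynomials with nonzero frequencies `p^m` and `p^m p'^l` respectively. The mismatch hypothesis says
the two frequency sets are disjoint, so by orthogonality of `cos (n θ)` on `[0, π]` only the product
of the constant terms survives.
-/

open Polynomial Polynomial.Chebyshev MeasureTheory Finset Real Set

lemma cos_image_Ioo_zero_pi : cos '' Ioo 0 π = Set.Ioo (-1) 1 := by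
  ext y
  constructor
  · rintro ⟨θ, ⟨h0, hπ⟩, rfl⟩
    exact ⟨by simpa using strictAntiOn_cos ⟨h0.le, hπ.le⟩ ⟨pi_pos.le, le_rfl⟩ hπ,
      by simpa using strictAntiOn_cos ⟨le_rfl, pi_pos.le⟩ ⟨h0.le, hπ.le⟩ h0⟩
  · rintro ⟨h1, h2⟩
    exact ⟨arccos y, ⟨arccos_pos.2 h2, (arccos_lt_pi).2 h1⟩, cos_arccos h1.le h2.le⟩

theorem integral_Icc_mul_chebyshev_weight (f : ℝ → ℝ) :
    ∫ x in Icc (-1 : ℝ) 1, f x * (1 / (π * √(1 - x ^ 2))) = (∫ θ in 0..π, f (cos θ)) / π := by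
  have hderiv : ∀ θ ∈ Ioo 0 π, HasDerivWithinAt cos (-sin θ) (Ioo 0 π) θ :=
    fun θ _ => (hasDerivAt_cos θ).hasDerivWithinAt
  have hjac : EqOn (fun θ => |-sin θ| • (f (cos θ) * (1 / (π * √(1 - cos θ ^ 2)))))
      (fun θ => f (cos θ) / π) (Ioo 0 π) := by
    rintro θ ⟨h0, hπ⟩
    have hsin : 0 < sin θ := sin_pos_of_pos_of_lt_pi h0 hπ
    dsimp only
    rw [← sin_sq, sqrt_sq hsin.le, abs_neg, abs_of_pos hsin, smul_eq_mul]
    field_simp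
  rw [integral_Icc_eq_integral_Ioo, ← cos_image_Ioo_zero_pi,
    integral_image_eq_integral_abs_deriv_smul measurableSet_Ioo hderiv
      (injOn_cos.mono Ioo_subset_Icc_self),
    setIntegral_congr_fun measurableSet_Ioo hjac, ← integral_Ioc_eq_integral_Ioo,
    ← intervalIntegral.integral_of_le pi_pos.le, intervalIntegral.integral_div]

theorem integral_cos_int_mul_eq_zero {n : ℤ} (hn : n ≠ 0) : ∫ θ in 0..π, cos (n * θ) = 0 := by
  rw [intervalIntegral.integral_comp_mul_left _ (Int.cast_ne_zero.2 hn)]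
  simp [sin_int_mul_pi]

theorem integral_cos_nat_mul_mul_cos_eq_zero {a b : ℕ} (hab : a ≠ b) :
    ∫ θ in 0..π, cos (a * θ) * cos (b * θ) = 0 := by
  have hsum : (a + b : ℤ) ≠ 0 := by omega
  have hdiff : (a - b : ℤ) ≠ 0 := by omega
  have hprod : ∀ θ, cos (a * θ) * cos (b * θ)
      = (cos (((a + b : ℤ) : ℝ) * θ) + cos (((a - b : ℤ) : ℝ) * θ)) / 2 := by
    intro θ
    push_cast
    rw [add_mul, sub_mul, cos_add, cos_sub]
    ring
  simp_rw [hprod]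
  rw [intervalIntegral.integral_div, intervalIntegral.integral_add
    (Continuous.intervalIntegrable (by fun_prop) _ _)
    (Continuous.intervalIntegrable (by fun_prop) _ _),
    integral_cos_int_mul_eq_zero hsum, integral_cos_int_mul_eq_zero hdiff]
  simp

theorem integral_const_add_mul_const_add {f g : ℝ → ℝ} (hf : Continuous f) (hg : Continuous g)
    (c d a b : ℝ) :
    ∫ x in a..b, (c + f x) * (d + g x)
      = (b - a) * (c * d) + (c * ∫ x in a..b, g x) + (d * ∫ x in a..b, f x)
        + ∫ x in a..b, f x * g x := by
  have hexpand : ∀ x, (c + f x) * (d + g x) = c * d + c * g x + d * f x + f x * g x :=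
    fun x => by ring
  simp_rw [hexpand]
  rw [intervalIntegral.integral_add, intervalIntegral.integral_add, intervalIntegral.integral_add,
    intervalIntegral.integral_const, intervalIntegral.integral_const_mul,
    intervalIntegral.integral_const_mul, smul_eq_mul]
  all_goals exact Continuous.intervalIntegrable (by fun_prop) _ _

section

variable {ι κ : Type*}

theorem integral_sum_cos_nat_mul_eq_zero (s : Finset ι) (a : ι → ℝ) {α : ι → ℕ}
    (hα : ∀ i ∈ s, α i ≠ 0) : ∫ θ in 0..π, ∑ i ∈ s, a i * cos (α i * θ) = 0 := by
  rw [intervalIntegral.integral_finsetSum fun i _ =>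
    Continuous.intervalIntegrable (by fun_prop) _ _]
  refine sum_eq_zero fun i hi => ?_
  rw [intervalIntegral.integral_const_mul, mul_eq_zero]
  right
  exact_mod_cast integral_cos_int_mul_eq_zero (n := α i) (by exact_mod_cast hα i hi)

theorem integral_sum_cos_nat_mul_mul_sum_cos_eq_zero (s : Finset ι) (t : Finset κ)
    (a : ι → ℝ) (b : κ → ℝ) {α : ι → ℕ} {β : κ → ℕ} (hαβ : ∀ i ∈ s, ∀ j ∈ t, α i ≠ β j) :
    ∫ θ in 0..π, (∑ i ∈ s, a i * cos (α i * θ)) * ∑ j ∈ t, b j * cos (β j * θ) = 0 := by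
  simp_rw [sum_mul_sum]
  rw [intervalIntegral.integral_finsetSum fun i _ =>
    Continuous.intervalIntegrable (by fun_prop) _ _]
  refine sum_eq_zero fun i hi => ?_
  rw [intervalIntegral.integral_finsetSum fun j _ =>
    Continuous.intervalIntegrable (by fun_prop) _ _]
  refine sum_eq_zero fun j hj => ?_
  simp_rw [mul_mul_mul_comm (a i)]
  rw [intervalIntegral.integral_const_mul, integral_cos_nat_mul_mul_cos_eq_zero (hαβ i hi j hj),
    mul_zero]

theorem integral_const_add_sum_cos_nat_mul (c : ℝ) (s : Finset ι) (a : ι → ℝ) {α : ι → ℕ}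
    (hα : ∀ i ∈ s, α i ≠ 0) : ∫ θ in 0..π, (c + ∑ i ∈ s, a i * cos (α i * θ)) = π * c := by
  rw [intervalIntegral.integral_add intervalIntegrable_const
    (Continuous.intervalIntegrable (by fun_prop) _ _), integral_sum_cos_nat_mul_eq_zero s a hα]
  simp [mul_comm]

theorem integral_const_add_sum_cos_nat_mul_mul_const_add_sum_cos_nat_mul (c d : ℝ)
    (s : Finset ι) (t : Finset κ) (a : ι → ℝ) (b : κ → ℝ) {α : ι → ℕ} {β : κ → ℕ}
    (hα : ∀ i ∈ s, α i ≠ 0) (hβ : ∀ j ∈ t, β j ≠ 0) (hαβ : ∀ i ∈ s, ∀ j ∈ t, α i ≠ β j) :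
    ∫ θ in 0..π, (c + ∑ i ∈ s, a i * cos (α i * θ)) * (d + ∑ j ∈ t, b j * cos (β j * θ))
      = π * (c * d) := by
  rw [integral_const_add_mul_const_add (by fun_prop) (by fun_prop),
    integral_sum_cos_nat_mul_eq_zero s a hα, integral_sum_cos_nat_mul_eq_zero t b hβ,
    integral_sum_cos_nat_mul_mul_sum_cos_eq_zero s t a b hαβ]
  ring

end

/-- a mismatched Chebyshev map `T_{p'}` produces zero dynamical
correlation on `B = a_c + Σ_{m=0}^L a_m T_{p^m}`. -/
theorem chebyshev_mismatched_map_no_correlation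
    (L : ℕ) (ac : ℝ) (a : ℕ → ℝ) (p p' : ℕ) (hp : 2 ≤ p) (hp' : 2 ≤ p')
    (hmismatch : ∀ m m' l : ℕ, m ≤ L → m' ≤ L → 1 ≤ l → p ^ m * p' ^ l ≠ p ^ m')
    (B : ℝ → ℝ)
    (hB : ∀ x, B x = ac + ∑ m ∈ range (L + 1), a m * (T ℝ (p ^ m : ℕ)).eval x)
    (l : ℕ) (hl : 1 ≤ l) :
    (∫ x in Set.Icc (-1 : ℝ) 1,
        B x * B ((T ℝ (p' ^ l : ℕ)).eval x) * (1 / (Real.pi * Real.sqrt (1 - x ^ 2)))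
      = ac ^ 2)
    ∧ (∫ x in Set.Icc (-1 : ℝ) 1, B x * (1 / (Real.pi * Real.sqrt (1 - x ^ 2)))) ^ 2
        = ac ^ 2 := by
  have hBcos : ∀ θ, B (cos θ) = ac + ∑ m ∈ range (L + 1), a m * cos ((p ^ m : ℕ) * θ) := by
    simp [hB, T_real_cos]
  have hBcomp : ∀ θ, B ((T ℝ (p' ^ l : ℕ)).eval (cos θ))
      = ac + ∑ m ∈ range (L + 1), a m * cos ((p ^ m * p' ^ l : ℕ) * θ) := by
    intro θ
    simp only [T_real_cos, Int.cast_natCast, hBcos, Nat.cast_mul, mul_assoc]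
  have hpow : ∀ m, p ^ m ≠ 0 := fun m => pow_ne_zero m (by omega)
  have hpow' : ∀ m, p ^ m * p' ^ l ≠ 0 := fun m => mul_ne_zero (hpow m) (pow_ne_zero l (by omega))
  have hfreq : ∀ m ∈ range (L + 1), ∀ m' ∈ range (L + 1), p ^ m ≠ p ^ m' * p' ^ l :=
    fun m hm m' hm' => (hmismatch m' m l (by grind) (by grind) hl).symm
  simp only [integral_Icc_mul_chebyshev_weight, hBcomp, hBcos,
    integral_const_add_sum_cos_nat_mul_mul_const_add_sum_cos_nat_mul ac ac _ _ a a
      (fun m _ => hpow m) (fun m _ => hpow' m) hfreq,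
    integral_const_add_sum_cos_nat_mul ac _ a (fun m _ => hpow m)]
  constructor <;> field_simp
end

section
/- For B(x) = T_1(x) − T_2(x) = x − (2x² − 1) and the dynamics X ↦ T_2(X), the expected squared error satisfies σ(N) = 1/N² exactly, where σ(N) = (1/N)(⟨B²⟩−⟨B⟩²) + (2/N²)Σ_{l=1}^{N}(N−l)(⟨B·(B∘T_{2^l})⟩−⟨B⟩²), averages with respect to dx/(π√(1−x²)) on [−1,1], N ≥ 1. -/
/-
Substituting `x = cos θ` turns the Chebyshev average into the mean over `[0, π]`, under which
`T_n` becomes `cos (n θ)`. Hence `⟨T_n⟩ = δ_{n0}`, and by `2 T_a T_b = T_{a+b} + T_{a-b}` also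
`⟨T_a T_b⟩ = δ_{ab} / 2` whenever `a + b > 0`. As `T_2 ∘ T_m = T_{2m}`, the observable
`B ∘ T_{2^l}` is `T_{2^l} - T_{2^{l+1}}`, so `⟨B⟩ = 0`, `⟨B²⟩ = 1`, and the correlation
`⟨B · B ∘ T_{2^l}⟩` is `-1/2` for `l = 1` and vanishes for `l ≥ 2`. The double sum therefore
collapses to its `l = 1` term and `σ(N) = 1/N - (N - 1)/N² = 1/N²`.
-/

open Polynomial Polynomial.Chebyshev MeasureTheory Finset Real

noncomputable def chebyshevWeight (x : ℝ) : ℝ := 1 / (π * √(1 - x ^ 2))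

theorem setIntegral_Icc_mul_chebyshevWeight (f : ℝ → ℝ) :
    ∫ x in Set.Icc (-1 : ℝ) 1, f x * chebyshevWeight x = π⁻¹ * ∫ θ in 0..π, f (cos θ) := by
  rw [← bijOn_cos.image_eq, integral_image_eq_integral_abs_deriv_smul measurableSet_Icc
      (fun θ _ => (hasDerivAt_cos θ).hasDerivWithinAt) injOn_cos,
    intervalIntegral.integral_of_le pi_pos.le, ← integral_const_mul,
    integral_Icc_eq_integral_Ioo, integral_Ioc_eq_integral_Ioo]
  refine setIntegral_congr_fun measurableSet_Ioo fun θ hθ => ?_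
  have hsin : 0 < sin θ := sin_pos_of_pos_of_lt_pi hθ.1 hθ.2
  have hsqrt : √(1 - cos θ ^ 2) = sin θ := by
    rw [← sin_sq, sqrt_sq hsin.le]
  simp only [chebyshevWeight, hsqrt, abs_neg, abs_of_pos hsin, smul_eq_mul]
  field_simp

theorem integral_cos_int_mul (n : ℤ) :
    ∫ θ in 0..π, cos (n * θ) = if n = 0 then π else 0 := by
  split_ifs with hn
  · simp [hn]
  · have hn' : (n : ℝ) ≠ 0 := by exact_mod_cast hn
    rw [intervalIntegral.integral_comp_mul_left (fun θ => cos θ) hn', integral_cos, mul_zero,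
      sin_int_mul_pi, sin_zero, sub_zero, smul_zero]

noncomputable def chebyshevMean : ℝ[X] →ₗ[ℝ] ℝ where
  toFun p := ∫ x in Set.Icc (-1 : ℝ) 1, p.eval x * chebyshevWeight x
  map_add' p q := by
    simp only [setIntegral_Icc_mul_chebyshevWeight, eval_add]
    rw [intervalIntegral.integral_add, mul_add] <;>
      exact (by fun_prop : Continuous fun θ => _).intervalIntegrable _ _
  map_smul' c p := by
    simp only [setIntegral_Icc_mul_chebyshevWeight, eval_smul, smul_eq_mul,
      intervalIntegral.integral_const_mul, RingHom.id_apply]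
    ring

theorem chebyshevMean_apply (p : ℝ[X]) :
    chebyshevMean p = ∫ x in Set.Icc (-1 : ℝ) 1, p.eval x * chebyshevWeight x := rfl

theorem chebyshevMean_T (n : ℤ) : chebyshevMean (T ℝ n) = if n = 0 then 1 else 0 := by
  simp only [chebyshevMean_apply, setIntegral_Icc_mul_chebyshevWeight, T_real_cos,
    integral_cos_int_mul]
  split_ifs
  · exact inv_mul_cancel₀ pi_ne_zero
  · exact mul_zero _

theorem chebyshevMean_T_mul_T {a b : ℤ} (hab : 0 < a + b) :
    chebyshevMean (T ℝ a * T ℝ b) = if a = b then 1 / 2 else 0 := by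
  have h := congrArg chebyshevMean (T_mul_T ℝ a b)
  rw [mul_assoc, ← C_ofNat, ← smul_eq_C_mul, map_smul, smul_eq_mul, map_add, chebyshevMean_T,
    chebyshevMean_T, if_neg hab.ne', zero_add] at h
  simp only [sub_eq_zero] at h
  split_ifs at h ⊢ <;> linarith

theorem chebyshevMean_T_one_sub_T_two_mul_comp_T {m : ℤ} (hm : 0 < m) :
    chebyshevMean ((T ℝ 1 - T ℝ 2) * (T ℝ 1 - T ℝ 2).comp (T ℝ m))
      = (if m = 1 then 1 else 0) - if m = 2 then 1 / 2 else 0 := by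
  rw [sub_comp, ← T_mul, ← T_mul, one_mul, mul_sub, sub_mul, sub_mul, map_sub, map_sub, map_sub,
    chebyshevMean_T_mul_T (by omega), chebyshevMean_T_mul_T (by omega),
    chebyshevMean_T_mul_T (by omega), chebyshevMean_T_mul_T (by omega)]
  split_ifs <;> first | omega | norm_num

theorem chebyshev_superefficient_example_T1_minus_T2_general
    (B : ℝ → ℝ) (hB : ∀ x, B x = x - (2 * x ^ 2 - 1))
    (σ : ℕ → ℝ)
    (hσ : ∀ N : ℕ, σ N =
      (1 / (N : ℝ)) *
        ((∫ x in Set.Icc (-1 : ℝ) 1, B x ^ 2 * (1 / (Real.pi * Real.sqrt (1 - x ^ 2))))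
          - (∫ x in Set.Icc (-1 : ℝ) 1, B x * (1 / (Real.pi * Real.sqrt (1 - x ^ 2)))) ^ 2)
      + (2 / (N : ℝ) ^ 2) * ∑ l ∈ Icc 1 N, ((N : ℝ) - (l : ℝ)) *
          ((∫ x in Set.Icc (-1 : ℝ) 1,
              B x * B ((T ℝ (2 ^ l : ℕ)).eval x) * (1 / (Real.pi * Real.sqrt (1 - x ^ 2))))
            - (∫ x in Set.Icc (-1 : ℝ) 1, B x * (1 / (Real.pi * Real.sqrt (1 - x ^ 2)))) ^ 2))
    (N : ℕ) :
    σ N = 1 / (N : ℝ) ^ 2 := by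
  have hB' (x : ℝ) : B x = (T ℝ 1 - T ℝ 2).eval x := by simp [hB, T_two]
  have hw (x : ℝ) : 1 / (π * √(1 - x ^ 2)) = chebyshevWeight x := rfl
  have hmean : ∫ x in Set.Icc (-1 : ℝ) 1, B x * chebyshevWeight x = 0 := by
    simp only [hB', ← chebyshevMean_apply, map_sub, chebyshevMean_T]
    norm_num
  have hvar : ∫ x in Set.Icc (-1 : ℝ) 1, B x ^ 2 * chebyshevWeight x = 1 := by
    have hcomp : (T ℝ 1 - T ℝ 2).comp (T ℝ 1) = T ℝ 1 - T ℝ 2 := by rw [T_one, comp_X]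
    have h := chebyshevMean_T_one_sub_T_two_mul_comp_T (m := 1) one_pos
    rw [hcomp, ← sq] at h
    simp only [hB', ← eval_pow, ← chebyshevMean_apply, h]
    norm_num
  have hcorr (l : ℕ) (hl : 1 ≤ l) :
      ∫ x in Set.Icc (-1 : ℝ) 1, B x * B ((T ℝ (2 ^ l : ℕ)).eval x) * chebyshevWeight x
        = if l = 1 then -(1 / 2) else 0 := by
    simp only [hB', ← eval_comp, ← eval_mul, ← chebyshevMean_apply]
    rw [chebyshevMean_T_one_sub_T_two_mul_comp_T (by positivity)]
    have h1 : (2 : ℤ) ^ l ≠ 1 := (one_lt_pow₀ one_lt_two (by omega)).ne'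
    have h2 : (2 : ℤ) ^ l = 2 ↔ l = 1 := by
      simpa using pow_right_inj₀ (a := (2 : ℤ)) (m := l) (n := 1) two_pos (by norm_num)
    push_cast
    simp [h1, h2, apply_ite]
  rw [hσ N]
  simp only [hw, hmean, hvar]
  rw [sum_congr rfl fun l hl => by rw [hcorr l (mem_Icc.1 hl).1]]
  simp only [sub_zero, zero_pow two_ne_zero, mul_ite, mul_zero, sum_ite_eq', mem_Icc]
  split_ifs with hN
  · have : (N : ℝ) ≠ 0 := Nat.cast_ne_zero.2 (by omega)
    field_simp
    ring
  · simp [show N = 0 by omega]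

/-- for `B(x) = T_1(x) − T_2(x) = x − (2x² − 1)` and the dynamics
`X ↦ T_2(X)`, the expected squared error is exactly `1/N²`. -/
theorem chebyshev_superefficient_example_T1_minus_T2
    (B : ℝ → ℝ) (hB : ∀ x, B x = x - (2 * x ^ 2 - 1))
    (σ : ℕ → ℝ)
    (hσ : ∀ N : ℕ, σ N =
      (1 / (N : ℝ)) *
        ((∫ x in Set.Icc (-1 : ℝ) 1, B x ^ 2 * (1 / (Real.pi * Real.sqrt (1 - x ^ 2))))
          - (∫ x in Set.Icc (-1 : ℝ) 1, B x * (1 / (Real.pi * Real.sqrt (1 - x ^ 2)))) ^ 2)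
      + (2 / (N : ℝ) ^ 2) * ∑ l ∈ Icc 1 N, ((N : ℝ) - (l : ℝ)) *
          ((∫ x in Set.Icc (-1 : ℝ) 1,
              B x * B ((T ℝ (2 ^ l : ℕ)).eval x) * (1 / (Real.pi * Real.sqrt (1 - x ^ 2))))
            - (∫ x in Set.Icc (-1 : ℝ) 1, B x * (1 / (Real.pi * Real.sqrt (1 - x ^ 2)))) ^ 2))
    (N : ℕ) (hN : 1 ≤ N) :
    σ N = 1 / (N : ℝ) ^ 2 :=
  chebyshev_superefficient_example_T1_minus_T2_general B hB σ hσ N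
end

section
/- Let s ≥ 1 and B(x₁,...,x_s) = a_c + Σ_{m=0}^{L} a_m ∏_{i=1}^{s} T_{p_i^m}(x_i), where p_1,...,p_s ≥ 2. With respect to the product measure ∏_i dx_i/(π√(1−x_i²)) on [−1,1]^s, ⟨B⟩ = a_c and for l ≥ 1 the correlation with the map (x₁,...,x_s) ↦ (T_{p_1}(x_1),...,T_{p_s}(x_s)) iterated l times satisfies ⟨B·B_l⟩ = a_c² + (1/2^s) Σ_{m=l}^{L} a_m a_{m−l}. -/
/-! The modes `χ_m x = ∏ i, T_{p_i ^ m} (x i)` are mean-zero and orthogonal for the product of the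
normalized Chebyshev measures `dx / (π √(1 - x²))`: in each coordinate `T_n T_k` integrates to
`δ_{nk} / 2` for `n ≠ 0`, and `p_i ^ m` determines `m` because `p_i ≥ 2`. Since `T_p ∘ T_q = T_{pq}`,
the `l`-th iterate of the product map sends `χ_m` to `χ_{m+l}`. Thus `B` and `B_l` are affine
combinations of modes, and their correlation is `a_c²` plus `2⁻ˢ` times the sum, over the modes
`m ∈ [l, L]` they share, of the products of coefficients `a_m a_{m-l}`. -/

open Polynomial Polynomial.Chebyshev MeasureTheory Finset Real

section Orthogonal

variable {Ω ι : Type*} [MeasurableSpace Ω] {μ : Measure Ω} {f : ι → Ω → ℝ}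

theorem integrable_sum_mul (hf : ∀ i, Integrable (f i) μ) (S : Finset ι) (u : ι → ℝ) :
    Integrable (fun ω => ∑ i ∈ S, u i * f i ω) μ :=
  integrable_finsetSum S fun i _ => (hf i).const_mul (u i)

theorem integral_sum_mul_eq_zero (hf : ∀ i, Integrable (f i) μ)
    (hmean : ∀ i, ∫ ω, f i ω ∂μ = 0) (S : Finset ι) (u : ι → ℝ) :
    ∫ ω, ∑ i ∈ S, u i * f i ω ∂μ = 0 := by
  rw [integral_finsetSum S fun i _ => (hf i).const_mul (u i)]
  simp [integral_const_mul, hmean]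

theorem integral_const_add_sum_of_integral_eq_zero [IsProbabilityMeasure μ]
    (hf : ∀ i, Integrable (f i) μ) (hmean : ∀ i, ∫ ω, f i ω ∂μ = 0)
    (a : ℝ) (S : Finset ι) (u : ι → ℝ) :
    ∫ ω, (a + ∑ i ∈ S, u i * f i ω) ∂μ = a := by
  rw [integral_add (integrable_const a) (integrable_sum_mul hf S u),
    integral_sum_mul_eq_zero hf hmean]
  simp

theorem integral_sum_mul_sum_of_orthogonal [DecidableEq ι] {c : ℝ}
    (hff : ∀ i j, Integrable (fun ω => f i ω * f j ω) μ)
    (horth : ∀ i j, ∫ ω, f i ω * f j ω ∂μ = if i = j then c else 0)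
    (S T : Finset ι) (u v : ι → ℝ) :
    ∫ ω, (∑ i ∈ S, u i * f i ω) * (∑ j ∈ T, v j * f j ω) ∂μ = c * ∑ i ∈ S ∩ T, u i * v i := by
  have hterm : ∀ i j ω, u i * f i ω * (v j * f j ω) = (u i * v j) * (f i ω * f j ω) := by
    intros; ring
  simp_rw [sum_mul_sum, hterm]
  rw [integral_finsetSum S fun i _ => integrable_finsetSum T fun j _ => (hff i j).const_mul _]
  simp_rw [integral_finsetSum T fun j _ => (hff _ j).const_mul _, integral_const_mul, horth,
    mul_ite, mul_zero, sum_ite_eq, ← sum_filter, mul_sum]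
  exact sum_congr (by ext; simp) fun i _ => by ring

theorem integral_affine_mul_affine_of_orthogonal [IsProbabilityMeasure μ] [DecidableEq ι] {c : ℝ}
    (hf : ∀ i, Integrable (f i) μ) (hff : ∀ i j, Integrable (fun ω => f i ω * f j ω) μ)
    (hmean : ∀ i, ∫ ω, f i ω ∂μ = 0)
    (horth : ∀ i j, ∫ ω, f i ω * f j ω ∂μ = if i = j then c else 0)
    (a b : ℝ) (S T : Finset ι) (u v : ι → ℝ) :
    ∫ ω, (a + ∑ i ∈ S, u i * f i ω) * (b + ∑ j ∈ T, v j * f j ω) ∂μ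
      = a * b + c * ∑ i ∈ S ∩ T, u i * v i := by
  have hX := integrable_sum_mul hf S u
  have hY := integrable_sum_mul hf T v
  have hXY : Integrable (fun ω => (∑ i ∈ S, u i * f i ω) * (∑ j ∈ T, v j * f j ω)) μ := by
    simp_rw [sum_mul_sum]
    exact integrable_finsetSum S fun i _ => integrable_finsetSum T fun j _ =>
      ((hff i j).const_mul (u i * v j)).congr (ae_of_all _ fun ω => by ring)
  have hexpand : ∀ ω, (a + ∑ i ∈ S, u i * f i ω) * (b + ∑ j ∈ T, v j * f j ω)
      = a * b + (a * ∑ j ∈ T, v j * f j ω + b * ∑ i ∈ S, u i * f i ω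
        + (∑ i ∈ S, u i * f i ω) * (∑ j ∈ T, v j * f j ω)) := by
    intro ω; ring
  simp_rw [hexpand]
  rw [integral_add, integral_add, integral_add, integral_sum_mul_sum_of_orthogonal hff horth]
  · simp [integral_const_mul, integral_sum_mul_eq_zero hf hmean]
  all_goals fun_prop

end Orthogonal

namespace Polynomial.Chebyshev

theorem iterate_eval_T {R : Type*} [CommRing R] (n : ℤ) (l : ℕ) (x : R) :
    (fun y => (T R n).eval y)^[l] x = (T R (n ^ l)).eval x := by
  induction l with
  | zero => simp
  | succ l ih => rw [Function.iterate_succ_apply', ih, ← eval_comp, ← T_mul, pow_succ']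

noncomputable def chebyshevMeasure : Measure ℝ := ENNReal.ofReal π⁻¹ • measureT

theorem withDensity_eq_chebyshevMeasure :
    (volume.restrict (Set.Icc (-1 : ℝ) 1)).withDensity
      (fun x => ENNReal.ofReal (1 / (π * √(1 - x ^ 2)))) = chebyshevMeasure := by
  have hdens : (fun x : ℝ => ENNReal.ofReal (1 / (π * √(1 - x ^ 2)))) =
      ENNReal.ofReal π⁻¹ • fun x => ENNReal.ofNNReal (.mk (√(1 - x ^ 2)⁻¹) (by positivity)) := by
    ext x
    simp [ENNReal.ofReal_mul (inv_nonneg.2 pi_pos.le), mul_comm, ← ENNReal.ofReal_coe_nnreal]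
  rw [chebyshevMeasure, measureT, restrict_withDensity measurableSet_Ioc,
    Measure.restrict_congr_set Ioc_ae_eq_Icc, hdens, withDensity_smul' _ _ ENNReal.ofReal_ne_top]

theorem measureT_real_univ : measureT.real Set.univ = π := by
  simpa using integral_eval_T_real_measureT_zero

instance : IsProbabilityMeasure chebyshevMeasure := by
  have hfin : measureT Set.univ ≠ ⊤ := fun h =>
    pi_ne_zero (by simpa [measureReal_def, h] using measureT_real_univ.symm)
  constructor
  rw [chebyshevMeasure, Measure.smul_apply, ← ENNReal.ofReal_toReal hfin, ← measureReal_def,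
    measureT_real_univ, smul_eq_mul, ← ENNReal.ofReal_mul (inv_nonneg.2 pi_pos.le),
    inv_mul_cancel₀ pi_ne_zero, ENNReal.ofReal_one]

theorem integrable_chebyshevMeasure {f : ℝ → ℝ} (hf : ContinuousOn f (Set.Icc (-1) 1)) :
    Integrable f chebyshevMeasure :=
  (integrable_measureT hf).smul_measure ENNReal.ofReal_ne_top

theorem integral_chebyshevMeasure (f : ℝ → ℝ) :
    ∫ x, f x ∂chebyshevMeasure = π⁻¹ * ∫ x, f x ∂measureT := by
  rw [chebyshevMeasure, integral_smul_measure, ENNReal.toReal_ofReal (inv_nonneg.2 pi_pos.le),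
    smul_eq_mul]

theorem integral_eval_T_chebyshevMeasure_of_ne_zero {n : ℤ} (hn : n ≠ 0) :
    ∫ x, (T ℝ n).eval x ∂chebyshevMeasure = 0 := by
  rw [integral_chebyshevMeasure, integral_eval_T_real_measureT_of_ne_zero hn, mul_zero]

theorem integral_eval_T_mul_eval_T_chebyshevMeasure {n m : ℕ} (hn : n ≠ 0) :
    ∫ x, (T ℝ n).eval x * (T ℝ m).eval x ∂chebyshevMeasure = if n = m then 1 / 2 else 0 := by
  rw [integral_chebyshevMeasure]
  split_ifs with h
  · subst h
    rw [integral_T_real_mul_self_measureT_of_ne_zero hn]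
    field_simp [pi_ne_zero]
  · rw [integral_eval_T_real_mul_eval_T_real_measureT_of_ne h, mul_zero]

section Mode

variable {ι : Type*} [Fintype ι] (p : ι → ℕ)

noncomputable def chebyshevMode (m : ℕ) (x : ι → ℝ) : ℝ := ∏ i, (T ℝ (p i ^ m : ℕ)).eval (x i)

theorem chebyshevMode_iterate (m l : ℕ) (x : ι → ℝ) :
    chebyshevMode p m (fun i => (fun y => (T ℝ (p i)).eval y)^[l] (x i))
      = chebyshevMode p (m + l) x := by
  refine prod_congr rfl fun i _ => ?_
  dsimp only
  rw [iterate_eval_T, ← eval_comp, ← T_mul]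
  push_cast
  rw [pow_add]

theorem integrable_chebyshevMode (m : ℕ) :
    Integrable (chebyshevMode p m) (Measure.pi fun _ => chebyshevMeasure) :=
  Integrable.fintype_prod (f := fun i y => (T ℝ (p i ^ m : ℕ)).eval y) fun _ =>
    integrable_chebyshevMeasure (Polynomial.continuous _).continuousOn

theorem integrable_chebyshevMode_mul (m k : ℕ) :
    Integrable (fun x => chebyshevMode p m x * chebyshevMode p k x)
      (Measure.pi fun _ => chebyshevMeasure) := by
  simp_rw [chebyshevMode, ← prod_mul_distrib]
  exact Integrable.fintype_prod
    (f := fun i y => (T ℝ (p i ^ m : ℕ)).eval y * (T ℝ (p i ^ k : ℕ)).eval y) fun _ =>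
      integrable_chebyshevMeasure (by fun_prop)

theorem integral_chebyshevMode [Nonempty ι] (hp : ∀ i, p i ≠ 0) (m : ℕ) :
    ∫ x, chebyshevMode p m x ∂(Measure.pi fun _ => chebyshevMeasure) = 0 := by
  obtain ⟨i⟩ := ‹Nonempty ι›
  simp only [chebyshevMode]
  rw [integral_fintype_prod_eq_prod (fun i y => (T ℝ (p i ^ m : ℕ)).eval y)]
  exact prod_eq_zero (mem_univ i)
    (integral_eval_T_chebyshevMeasure_of_ne_zero (by simpa using pow_ne_zero m (hp i)))

theorem integral_chebyshevMode_mul [Nonempty ι] (hp : ∀ i, 2 ≤ p i) (m k : ℕ) :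
    ∫ x, chebyshevMode p m x * chebyshevMode p k x ∂(Measure.pi fun _ => chebyshevMeasure)
      = if m = k then (1 / 2) ^ Fintype.card ι else 0 := by
  simp_rw [chebyshevMode, ← prod_mul_distrib]
  rw [integral_fintype_prod_eq_prod
    (fun i y => (T ℝ (p i ^ m : ℕ)).eval y * (T ℝ (p i ^ k : ℕ)).eval y)]
  have hfactor : ∀ i, ∫ y, (T ℝ (p i ^ m : ℕ)).eval y * (T ℝ (p i ^ k : ℕ)).eval y
      ∂chebyshevMeasure = if m = k then 1 / 2 else 0 := fun i => by
    simp_rw [integral_eval_T_mul_eval_T_chebyshevMeasure (pow_pos (by linarith [hp i]) m).ne',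
      Nat.pow_right_inj (hp i)]
  simp_rw [hfactor]
  split_ifs <;> simp

end Mode

end Polynomial.Chebyshev

theorem Finset.range_inter_map_addRightEmbedding (L l : ℕ) :
    range (L + 1) ∩ (range (L + 1)).map (addRightEmbedding l) = Icc l L := by
  ext m
  simp only [mem_inter, mem_range, mem_map, addRightEmbedding_apply, mem_Icc]
  constructor
  · rintro ⟨hm, k, hk, rfl⟩
    omega
  · rintro ⟨hlm, hmL⟩
    exact ⟨by omega, m - l, by omega, by omega⟩

/-- mean and two-point correlations for the multi-dimensional
Chebyshev integrand under the product Chebyshev map iterated `l` times. -/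
theorem multidim_chebyshev_correlation
    (s : ℕ) (hs : 1 ≤ s) (L : ℕ) (ac : ℝ) (a : ℕ → ℝ)
    (p : Fin s → ℕ) (hp : ∀ i, 2 ≤ p i)
    (μs : Measure (Fin s → ℝ))
    (hμs : μs = Measure.pi (fun _ : Fin s =>
      (volume.restrict (Set.Icc (-1 : ℝ) 1)).withDensity
        (fun x => ENNReal.ofReal (1 / (Real.pi * Real.sqrt (1 - x ^ 2))))))
    (B : (Fin s → ℝ) → ℝ)
    (hB : ∀ x, B x = ac + ∑ m ∈ range (L + 1),
        a m * ∏ i : Fin s, (T ℝ ((p i) ^ m : ℕ)).eval (x i)) :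
    (∫ x, B x ∂μs = ac)
    ∧ (∀ l : ℕ, 1 ≤ l →
        ∫ x, B x * B (fun i => (fun y => (T ℝ (p i)).eval y)^[l] (x i)) ∂μs
          = ac ^ 2 + (1 / (2 : ℝ) ^ s) * ∑ m ∈ Icc l L, a m * a (m - l)) := by
  rw [withDensity_eq_chebyshevMeasure] at hμs
  subst hμs
  have : Nonempty (Fin s) := ⟨⟨0, hs⟩⟩
  have hBmode : ∀ x, B x = ac + ∑ m ∈ range (L + 1), a m * chebyshevMode p m x := hB
  have hBshift : ∀ l x, B (fun i => (fun y => (T ℝ (p i)).eval y)^[l] (x i))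
      = ac + ∑ j ∈ (range (L + 1)).map (addRightEmbedding l), a (j - l) * chebyshevMode p j x := by
    intro l x
    simp [hBmode, chebyshevMode_iterate]
  have hmean := integral_chebyshevMode p fun i => by linarith [hp i]
  have horth := integral_chebyshevMode_mul p hp
  refine ⟨?_, fun l _ => ?_⟩
  · simp_rw [hBmode]
    exact integral_const_add_sum_of_integral_eq_zero (integrable_chebyshevMode p) hmean _ _ _
  · simp_rw [hBshift, hBmode]
    rw [integral_affine_mul_affine_of_orthogonal (integrable_chebyshevMode p)
      (integrable_chebyshevMode_mul p) hmean horth, range_inter_map_addRightEmbedding,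
      Fintype.card_fin, one_div_pow, sq]
end

section
/- With h and ρ_NG as above, define P_l(y) = T_l(h(y)). Then ∫_{−∞}^{∞} P_i(y) P_j(y) ρ_NG(y) dy = δ_{ij}(1+δ_{i0})/2 for all nonnegative integers i, j. -/
/-!
On `y > 0` the substitution `θ = arctan (y ^ α)` turns `h y` into `cos θ` and `ρ_NG y dy` into
`dθ / π`, because `ρ_NG y = (d/dy) arctan (|y| ^ α) / π`. As `h` is odd and `ρ_NG` even, the
negative half-line covers `θ ∈ (π / 2, π)` in the same way. So `h` pushes `ρ_NG` forward to the
Chebyshev measure `dx / (π √(1 - x²))` on `[-1, 1]`, and the claim is the classical orthogonality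
of the Chebyshev polynomials, `T_l (cos θ) = cos (l θ)`.
-/

open Polynomial Polynomial.Chebyshev MeasureTheory Real Set

noncomputable def nonGaussianMap (α y : ℝ) : ℝ := Real.sign y / √(1 + |y| ^ (2 * α))

noncomputable def nonGaussianDensity (α y : ℝ) : ℝ :=
  α * |y| ^ (α - 1) / (π * (1 + |y| ^ (2 * α)))

lemma nonGaussianMap_neg (α y : ℝ) : nonGaussianMap α (-y) = -nonGaussianMap α y := by
  simp [nonGaussianMap, Real.sign_neg, neg_div]

lemma nonGaussianDensity_neg (α y : ℝ) : nonGaussianDensity α (-y) = nonGaussianDensity α y := by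
  simp [nonGaussianDensity]

lemma nonGaussianDensity_nonneg {α : ℝ} (hα : 0 ≤ α) (y : ℝ) : 0 ≤ nonGaussianDensity α y := by
  unfold nonGaussianDensity; positivity

lemma cos_arctan_rpow {y : ℝ} (hy : 0 < y) (α : ℝ) :
    cos (arctan (y ^ α)) = nonGaussianMap α y := by
  rw [cos_arctan, nonGaussianMap, Real.sign_of_pos hy, abs_of_pos hy, ← rpow_natCast,
    ← rpow_mul hy.le, mul_comm]
  norm_num

lemma hasDerivAt_arctan_rpow {y : ℝ} (hy : 0 < y) (α : ℝ) :
    HasDerivAt (fun y ↦ arctan (y ^ α)) (π * nonGaussianDensity α y) y := by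
  convert (hasDerivAt_rpow_const (p := α) (Or.inl hy.ne')).arctan using 1
  rw [nonGaussianDensity, abs_of_pos hy, ← rpow_natCast, ← rpow_mul hy.le, mul_comm α]
  field_simp
  norm_num

lemma strictMonoOn_arctan_rpow {α : ℝ} (hα : 0 < α) :
    StrictMonoOn (fun y ↦ arctan (y ^ α)) (Ioi 0) :=
  arctan_strictMono.comp_strictMonoOn
    ((strictMonoOn_rpow_Ici_of_exponent_pos hα).mono Ioi_subset_Ici_self)

lemma image_arctan_rpow_Ioi {α : ℝ} (hα : 0 < α) :
    (fun y ↦ arctan (y ^ α)) '' Ioi 0 = Ioo 0 (π / 2) := by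
  refine Subset.antisymm ?_ fun θ ⟨hθ₀, hθ⟩ ↦ ?_
  · rintro _ ⟨y, hy, rfl⟩
    exact ⟨arctan_zero ▸ arctan_strictMono (rpow_pos_of_pos hy α), arctan_lt_pi_div_two _⟩
  · have htan : 0 < tan θ := tan_pos_of_pos_of_lt_pi_div_two hθ₀ hθ
    refine ⟨tan θ ^ α⁻¹, rpow_pos_of_pos htan _, ?_⟩
    simp only [rpow_inv_rpow htan.le hα.ne', arctan_tan (by linarith [pi_pos]) hθ]

lemma eqOn_abs_pi_mul_nonGaussianDensity_smul {α : ℝ} (hα : 0 ≤ α) (g : ℝ → ℝ) :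
    EqOn (fun y ↦ |π * nonGaussianDensity α y| • g (cos (arctan (y ^ α))))
      (fun y ↦ π * (g (nonGaussianMap α y) * nonGaussianDensity α y)) (Ioi 0) := fun y hy ↦ by
  simp only [smul_eq_mul, cos_arctan_rpow hy,
    abs_of_nonneg (mul_nonneg pi_nonneg (nonGaussianDensity_nonneg hα y))]
  ring

lemma integrableOn_comp_nonGaussianMap_Ioi_iff {α : ℝ} (hα : 0 < α) (g : ℝ → ℝ) :
    IntegrableOn (fun y ↦ g (nonGaussianMap α y) * nonGaussianDensity α y) (Ioi 0) ↔
      IntegrableOn (fun θ ↦ g (cos θ)) (Ioo 0 (π / 2)) := by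
  rw [← image_arctan_rpow_Ioi hα, integrableOn_image_iff_integrableOn_abs_deriv_smul
    measurableSet_Ioi (fun y hy ↦ (hasDerivAt_arctan_rpow hy α).hasDerivWithinAt)
    (strictMonoOn_arctan_rpow hα).injOn, integrableOn_congr_fun
    (eqOn_abs_pi_mul_nonGaussianDensity_smul hα.le g) measurableSet_Ioi]
  exact (integrable_const_mul_iff (isUnit_iff_ne_zero.mpr pi_ne_zero) _).symm

lemma setIntegral_comp_nonGaussianMap_Ioi {α : ℝ} (hα : 0 < α) (g : ℝ → ℝ) :
    ∫ y in Ioi 0, g (nonGaussianMap α y) * nonGaussianDensity α y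
      = (∫ θ in 0..π / 2, g (cos θ)) / π := by
  rw [intervalIntegral.integral_of_le (by positivity), integral_Ioc_eq_integral_Ioo,
    ← image_arctan_rpow_Ioi hα, integral_image_eq_integral_abs_deriv_smul
    measurableSet_Ioi (fun y hy ↦ (hasDerivAt_arctan_rpow hy α).hasDerivWithinAt)
    (strictMonoOn_arctan_rpow hα).injOn, setIntegral_congr_fun measurableSet_Ioi
    (eqOn_abs_pi_mul_nonGaussianDensity_smul hα.le g), integral_const_mul]
  field_simp

lemma integral_comp_nonGaussianMap_mul_density {α : ℝ} (hα : 0 < α) {g : ℝ → ℝ}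
    (hg : ContinuousOn g (Icc (-1) 1)) :
    ∫ y, g (nonGaussianMap α y) * nonGaussianDensity α y = (∫ x, g x ∂measureT) / π := by
  have hg_cos : Continuous fun θ ↦ g (cos θ) :=
    hg.comp_continuous continuous_cos fun θ ↦ ⟨neg_one_le_cos θ, cos_le_one θ⟩
  have hg_neg_cos : Continuous fun θ ↦ g (-cos θ) :=
    hg.comp_continuous continuous_cos.neg fun θ ↦
      ⟨neg_le_neg (cos_le_one θ), neg_le.mp (neg_one_le_cos θ)⟩
  have hpos : IntegrableOn (fun y ↦ g (nonGaussianMap α y) * nonGaussianDensity α y) (Ioi 0) :=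
    (integrableOn_comp_nonGaussianMap_Ioi_iff hα g).2
      (hg_cos.integrableOn_Icc.mono_set Ioo_subset_Icc_self)
  have hneg : IntegrableOn (fun y ↦ g (nonGaussianMap α y) * nonGaussianDensity α y) (Iio 0) := by
    have h := (integrableOn_comp_nonGaussianMap_Ioi_iff hα (fun x ↦ g (-x))).2
      (hg_neg_cos.integrableOn_Icc.mono_set Ioo_subset_Icc_self)
    rw [← neg_zero] at h
    refine h.comp_neg_Iio.congr_fun (fun y _ ↦ ?_) measurableSet_Iio
    simp only [nonGaussianMap_neg, nonGaussianDensity_neg, neg_neg]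
  have hneg_eq : ∫ y in Iio 0, g (nonGaussianMap α y) * nonGaussianDensity α y
      = (∫ θ in π / 2..π, g (cos θ)) / π := by
    rw [← integral_Iic_eq_integral_Iio, ← neg_zero, ← integral_comp_neg_Ioi]
    simp_rw [nonGaussianMap_neg, nonGaussianDensity_neg, setIntegral_comp_nonGaussianMap_Ioi hα (fun x ↦ g (-x)), ← cos_pi_sub,
      intervalIntegral.integral_comp_sub_left (fun θ ↦ g (cos θ)), sub_zero, sub_half]
  rw [← intervalIntegral.integral_Iio_add_Ici hneg
    (Iff.mpr integrableOn_Ici_iff_integrableOn_Ioi hpos), integral_Ici_eq_integral_Ioi,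
    setIntegral_comp_nonGaussianMap_Ioi hα, hneg_eq, integral_measureT_eq_integral_cos,
    ← add_div, add_comm, intervalIntegral.integral_add_adjacent_intervals
      (hg_cos.intervalIntegrable _ _) (hg_cos.intervalIntegrable _ _)]

/-- the functions `P_l = T_l ∘ h` are orthonormal (in the Chebyshev
normalization) with respect to the non-Gaussian density `ρ_NG` on the real line. -/
theorem nonGaussian_orthogonality
    (α : ℝ) (hα : 0 < α) (h ρNG : ℝ → ℝ)
    (hh : ∀ y : ℝ, h y = Real.sign y / Real.sqrt (1 + |y| ^ (2 * α)))
    (hρ : ∀ y : ℝ, ρNG y = α * |y| ^ (α - 1) / (Real.pi * (1 + |y| ^ (2 * α))))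
    (P : ℕ → ℝ → ℝ) (hP : ∀ l y, P l y = (T ℝ l).eval (h y))
    (i j : ℕ) :
    ∫ y : ℝ, P i y * P j y * ρNG y
      = (if i = j then (1 : ℝ) else 0) * (1 + if i = 0 then (1 : ℝ) else 0) / 2 := by
  obtain rfl : h = nonGaussianMap α := funext hh
  obtain rfl : ρNG = nonGaussianDensity α := funext hρ
  simp only [hP]
  rw [integral_comp_nonGaussianMap_mul_density hα (g := fun x ↦ (T ℝ i).eval x * (T ℝ j).eval x)
    (by fun_prop)]
  rcases eq_or_ne i j with rfl | hij
  · rcases eq_or_ne i 0 with rfl | hi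
    · rw [Nat.cast_zero, integral_eval_T_real_mul_self_measureT_zero]
      simp [pi_ne_zero]
    · rw [integral_T_real_mul_self_measureT_of_ne_zero hi, div_right_comm, div_self pi_ne_zero]
      simp [hi]
  · simp [integral_eval_T_real_mul_eval_T_real_measureT_of_ne hij, hij]
end
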